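/- For each a ∈ (0,1), the function μ_a(r) = (π / (2 sin(πa))) · F(a, 1-a; 1; 1-r²) / F(a, 1-a; 1; r²) is a strictly decreasing homeomorphism from (0,1) onto (0,∞). -/

import Mathlib

/-- The shifted factorial (Appell symbol) `(a)ₙ = a (a+1) ⋯ (a+n-1)`. -/
noncomputable def poch (a : ℝ) (n : ℕ) : ℝ := ∏ i ∈ Finset.range n, (a + i)

/-- The Gaussian hypergeometric function `F(a,b;c;x)` as a power series. -/
noncomputable def hypF (a b c x : ℝ) : ℝ :=
  ∑' n : ℕ, poch a n * poch b n / (poch c n * (n.factorial : ℝ)) * x ^ n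

/-- The function `μₐ`. -/
noncomputable def muA (a r : ℝ) : ℝ :=
  (Real.pi / (2 * Real.sin (Real.pi * a))) * hypF a (1-a) 1 (1 - r^2) / hypF a (1-a) 1 (r^2)

/-!
Write `F(x) = F(a,1-a;1;x) = ∑ cₙ xⁿ`. The coefficients satisfy
`(n+1)² cₙ₊₁ = (n(n+1) + a(1-a)) cₙ`, so `0 < cₙ ≤ 1` and `n cₙ` increases from `c₁ = a(1-a)`.
Hence `F` is continuous and strictly increasing on `[0,1)` with `F(0) = 1`, and
`F(x) ≥ 1 - a(1-a) log(1-x)` tends to `∞` as `x → 1⁻`. Consequently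
`μₐ(r) = C F(1-r²) / F(r²)` is continuous and strictly decreasing on `(0,1)`, tends to `∞` as
`r → 0⁺` and to `0` as `r → 1⁻`, and the intermediate value theorem gives every value in `(0,∞)`.
-/

open Real Set Filter Topology

lemma poch_succ (a : ℝ) (n : ℕ) : poch a (n + 1) = poch a n * (a + n) :=
  Finset.prod_range_succ _ n

lemma poch_pos {a : ℝ} (ha : 0 < a) (n : ℕ) : 0 < poch a n :=
  Finset.prod_pos fun _ _ => by positivity

lemma continuousOn_tsum_mul_pow {c : ℕ → ℝ} {M : ℝ} (hc : ∀ n, |c n| ≤ M) :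
    ContinuousOn (fun x => ∑' n, c n * x ^ n) (Ioo (-1) 1) := by
  intro x hx
  obtain ⟨b, hxb, hb1⟩ := exists_between (abs_lt.2 hx)
  have hb0 : 0 ≤ b := (abs_nonneg x).trans hxb.le
  have hcont : ContinuousOn (fun x => ∑' n, c n * x ^ n) (Icc (-b) b) := by
    refine continuousOn_tsum (fun n => (continuous_const.mul (continuous_pow n)).continuousOn)
      ((summable_geometric_of_lt_one hb0 hb1).mul_left M) fun n y hy => ?_
    rw [norm_mul, norm_pow, Real.norm_eq_abs, Real.norm_eq_abs]
    exact mul_le_mul (hc n) (pow_le_pow_left₀ (abs_nonneg y) (abs_le.2 hy) n) (by positivity)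
      ((abs_nonneg _).trans (hc n))
  exact (hcont.continuousAt (Icc_mem_nhds (by linarith [neg_abs_le x]) (lt_of_le_of_lt
    (le_abs_self x) hxb))).continuousWithinAt

noncomputable def hypCoeff (a b c : ℝ) (n : ℕ) : ℝ :=
  poch a n * poch b n / (poch c n * (n.factorial : ℝ))

lemma hypF_eq_tsum (a b c x : ℝ) : hypF a b c x = ∑' n, hypCoeff a b c n * x ^ n := rfl

lemma hypCoeff_zero (a b c : ℝ) : hypCoeff a b c 0 = 1 := by
  simp [hypCoeff, poch]

lemma hypCoeff_succ (a b c : ℝ) (n : ℕ) :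
    hypCoeff a b c (n + 1) = hypCoeff a b c n * ((a + n) * (b + n) / ((c + n) * (n + 1))) := by
  simp only [hypCoeff, poch_succ, Nat.factorial_succ, Nat.cast_mul, Nat.cast_succ]
  rw [div_mul_div_comm]
  congr 1 <;> ring

lemma hypCoeff_pos {a b c : ℝ} (ha : 0 < a) (hb : 0 < b) (hc : 0 < c) (n : ℕ) :
    0 < hypCoeff a b c n :=
  div_pos (mul_pos (poch_pos ha n) (poch_pos hb n))
    (mul_pos (poch_pos hc n) (Nat.cast_pos.2 n.factorial_pos))

lemma hypF_zero (a b c : ℝ) : hypF a b c 0 = 1 := by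
  rw [hypF_eq_tsum, tsum_eq_single 0 fun n hn => by simp [hn], hypCoeff_zero, pow_zero, mul_one]

section ZeroBalanced

variable {a : ℝ}

lemma sq_succ_mul_hypCoeff_succ (a : ℝ) (n : ℕ) :
    (n + 1) ^ 2 * hypCoeff a (1 - a) 1 (n + 1) =
      (n * (n + 1) + a * (1 - a)) * hypCoeff a (1 - a) 1 n := by
  rw [hypCoeff_succ]
  field_simp
  ring

lemma hypCoeff_zeroBalanced_pos (ha : a ∈ Ioo (0 : ℝ) 1) (n : ℕ) : 0 < hypCoeff a (1 - a) 1 n :=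
  hypCoeff_pos ha.1 (sub_pos.2 ha.2) one_pos n

lemma hypCoeff_zeroBalanced_le_one (ha : a ∈ Ioo (0 : ℝ) 1) (n : ℕ) :
    hypCoeff a (1 - a) 1 n ≤ 1 := by
  refine (hypCoeff_zero a (1 - a) 1).le.trans' (antitone_nat_of_succ_le (fun n => ?_) n.zero_le)
  refine le_of_mul_le_mul_left ?_ (by positivity : (0 : ℝ) < (n + 1) ^ 2)
  rw [sq_succ_mul_hypCoeff_succ]
  have : a * (1 - a) ≤ n + 1 := by nlinarith [ha.1, ha.2, n.cast_nonneg (α := ℝ)]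
  nlinarith [mul_le_mul_of_nonneg_right this (hypCoeff_zeroBalanced_pos ha n).le]

lemma mul_one_sub_le_succ_mul_hypCoeff (ha : a ∈ Ioo (0 : ℝ) 1) (n : ℕ) :
    a * (1 - a) ≤ (n + 1) * hypCoeff a (1 - a) 1 (n + 1) := by
  have hmono : Monotone fun n : ℕ => n * hypCoeff a (1 - a) 1 n := by
    refine monotone_nat_of_le_succ fun n => ?_
    refine le_of_mul_le_mul_left ?_ (by positivity : (0 : ℝ) < n + 1)
    rw [Nat.cast_succ]
    have hrec := sq_succ_mul_hypCoeff_succ a n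
    have : 0 ≤ a * (1 - a) := mul_nonneg ha.1.le (sub_nonneg.2 ha.2.le)
    nlinarith [mul_nonneg this (hypCoeff_zeroBalanced_pos ha n).le]
  have h1 := hmono (Nat.succ_le_succ n.zero_le)
  have h0 := sq_succ_mul_hypCoeff_succ a 0
  simp only [Nat.cast_zero, hypCoeff_zero] at h0 h1
  push_cast at h1
  linarith

lemma summable_hypCoeff_mul_pow (ha : a ∈ Ioo (0 : ℝ) 1) {x : ℝ} (hx : |x| < 1) :
    Summable fun n => hypCoeff a (1 - a) 1 n * x ^ n := by
  refine .of_norm_bounded (summable_geometric_of_lt_one (abs_nonneg x) hx) fun n => ?_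
  rw [norm_mul, norm_pow, Real.norm_eq_abs, Real.norm_eq_abs,
    abs_of_pos (hypCoeff_zeroBalanced_pos ha n)]
  exact mul_le_of_le_one_left (by positivity) (hypCoeff_zeroBalanced_le_one ha n)

lemma continuousOn_hypF (ha : a ∈ Ioo (0 : ℝ) 1) :
    ContinuousOn (hypF a (1 - a) 1) (Ioo (-1) 1) :=
  continuousOn_tsum_mul_pow fun n =>
    (abs_of_pos (hypCoeff_zeroBalanced_pos ha n)).trans_le (hypCoeff_zeroBalanced_le_one ha n)

lemma tendsto_hypF_nhds_zero (ha : a ∈ Ioo (0 : ℝ) 1) :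
    Tendsto (hypF a (1 - a) 1) (𝓝 0) (𝓝 1) := by
  simpa only [hypF_zero] using
    ((continuousOn_hypF ha).continuousAt (Ioo_mem_nhds (by norm_num) one_pos)).tendsto

lemma strictMonoOn_hypF (ha : a ∈ Ioo (0 : ℝ) 1) :
    StrictMonoOn (hypF a (1 - a) 1) (Ico 0 1) := by
  intro x hx y hy hxy
  rw [hypF_eq_tsum, hypF_eq_tsum]
  refine Summable.tsum_lt_tsum (i := 1) (fun n => ?_) ?_
    (summable_hypCoeff_mul_pow ha ((abs_of_nonneg hx.1).trans_lt hx.2))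
    (summable_hypCoeff_mul_pow ha ((abs_of_nonneg hy.1).trans_lt hy.2))
  · exact mul_le_mul_of_nonneg_left (pow_le_pow_left₀ hx.1 hxy.le n)
      (hypCoeff_zeroBalanced_pos ha n).le
  · simpa only [pow_one] using mul_lt_mul_of_pos_left hxy (hypCoeff_zeroBalanced_pos ha 1)

lemma one_le_hypF (ha : a ∈ Ioo (0 : ℝ) 1) {x : ℝ} (hx : x ∈ Ico 0 1) :
    1 ≤ hypF a (1 - a) 1 x :=
  (hypF_zero a (1 - a) 1).symm.le.trans
    ((strictMonoOn_hypF ha).monotoneOn ⟨le_rfl, one_pos⟩ hx hx.1)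

lemma hypF_pos (ha : a ∈ Ioo (0 : ℝ) 1) {x : ℝ} (hx : x ∈ Ico 0 1) : 0 < hypF a (1 - a) 1 x :=
  one_pos.trans_le (one_le_hypF ha hx)

/-- `-log (1 - x) = ∑ xⁿ⁺¹/(n+1)`, and `(n+1) cₙ₊₁ ≥ a(1-a)` compares the two series termwise. -/
lemma one_sub_mul_log_le_hypF (ha : a ∈ Ioo (0 : ℝ) 1) {x : ℝ} (hx : x ∈ Ico 0 1) :
    1 - a * (1 - a) * log (1 - x) ≤ hypF a (1 - a) 1 x := by
  have hx' : |x| < 1 := (abs_of_nonneg hx.1).trans_lt hx.2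
  have hs := summable_hypCoeff_mul_pow ha hx'
  have htail : a * (1 - a) * -log (1 - x) ≤ ∑' n, hypCoeff a (1 - a) 1 (n + 1) * x ^ (n + 1) := by
    refine hasSum_le (fun n => ?_) ((hasSum_pow_div_log_of_abs_lt_one hx').mul_left _)
      ((summable_nat_add_iff 1).2 hs).hasSum
    rw [← mul_div_assoc, div_le_iff₀ (by positivity)]
    nlinarith [mul_le_mul_of_nonneg_right (mul_one_sub_le_succ_mul_hypCoeff ha n)
      (pow_nonneg hx.1 (n + 1))]
  rw [hypF_eq_tsum, hs.tsum_eq_zero_add, hypCoeff_zero, pow_zero, mul_one]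
  linarith

lemma tendsto_hypF_nhdsLT_one (ha : a ∈ Ioo (0 : ℝ) 1) :
    Tendsto (hypF a (1 - a) 1) (𝓝[<] 1) atTop := by
  have hsub : Tendsto (fun x : ℝ => 1 - x) (𝓝[<] 1) (𝓝[>] 0) := by
    refine tendsto_nhdsWithin_iff.2 ⟨?_, eventually_nhdsWithin_of_forall fun x hx => sub_pos.2 (mem_Iio.1 hx)⟩
    exact ((continuous_sub_left 1).tendsto' 1 0 (sub_self 1)).mono_left nhdsWithin_le_nhds
  have hlog : Tendsto (fun x => 1 - a * (1 - a) * log (1 - x)) (𝓝[<] 1) atTop := by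
    have hk : 0 < a * (1 - a) := mul_pos ha.1 (sub_pos.2 ha.2)
    simpa [sub_eq_add_neg, ← mul_neg] using tendsto_atTop_add_const_left _ 1
      ((tendsto_neg_atBot_atTop.comp (tendsto_log_nhdsGT_zero.comp hsub)).const_mul_atTop hk)
  refine tendsto_atTop_mono' _ ?_ hlog
  filter_upwards [Ioo_mem_nhdsLT one_pos] with x hx
  exact one_sub_mul_log_le_hypF ha ⟨hx.1.le, hx.2⟩

end ZeroBalanced

section Modulus

variable {a : ℝ}

lemma sq_mem_Ico_zero_one {r : ℝ} (hr : r ∈ Ioo (0 : ℝ) 1) : r ^ 2 ∈ Ico (0 : ℝ) 1 :=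
  ⟨(pow_pos hr.1 2).le, pow_lt_one₀ hr.1.le hr.2 two_ne_zero⟩

lemma one_sub_sq_mem_Ico_zero_one {r : ℝ} (hr : r ∈ Ioo (0 : ℝ) 1) :
    1 - r ^ 2 ∈ Ico (0 : ℝ) 1 :=
  ⟨sub_nonneg.2 (sq_mem_Ico_zero_one hr).2.le, sub_lt_self 1 (pow_pos hr.1 2)⟩

lemma pi_div_two_mul_sin_pos (ha : a ∈ Ioo (0 : ℝ) 1) : 0 < π / (2 * sin (π * a)) :=
  div_pos pi_pos (mul_pos two_pos
    (sin_pos_of_pos_of_lt_pi (mul_pos pi_pos ha.1) (mul_lt_of_lt_one_right pi_pos ha.2)))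

lemma muA_pos (ha : a ∈ Ioo (0 : ℝ) 1) {r : ℝ} (hr : r ∈ Ioo (0 : ℝ) 1) : 0 < muA a r :=
  div_pos (mul_pos (pi_div_two_mul_sin_pos ha) (hypF_pos ha (one_sub_sq_mem_Ico_zero_one hr)))
    (hypF_pos ha (sq_mem_Ico_zero_one hr))

lemma strictAntiOn_muA (ha : a ∈ Ioo (0 : ℝ) 1) : StrictAntiOn (muA a) (Ioo 0 1) := by
  intro r hr s hs hrs
  have hsq : r ^ 2 < s ^ 2 := pow_lt_pow_left₀ hrs hr.1.le two_ne_zero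
  have hF := strictMonoOn_hypF ha
  have hC := pi_div_two_mul_sin_pos ha
  refine div_lt_div₀ (mul_lt_mul_of_pos_left ?_ hC) ?_
    (mul_pos hC (hypF_pos ha (one_sub_sq_mem_Ico_zero_one hr))).le
    (hypF_pos ha (sq_mem_Ico_zero_one hr))
  · exact hF (one_sub_sq_mem_Ico_zero_one hs) (one_sub_sq_mem_Ico_zero_one hr) (by linarith)
  · exact hF.monotoneOn (sq_mem_Ico_zero_one hr) (sq_mem_Ico_zero_one hs) hsq.le

lemma continuousOn_muA (ha : a ∈ Ioo (0 : ℝ) 1) : ContinuousOn (muA a) (Ioo 0 1) := by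
  have hF := (continuousOn_hypF ha).mono (Ico_subset_Ioo_left neg_one_lt_zero)
  exact (continuousOn_const.mul (hF.comp (by fun_prop) fun _ => one_sub_sq_mem_Ico_zero_one)).div
    (hF.comp (by fun_prop) fun _ => sq_mem_Ico_zero_one)
    fun _ hr => (hypF_pos ha (sq_mem_Ico_zero_one hr)).ne'

lemma tendsto_muA_nhdsGT_zero (ha : a ∈ Ioo (0 : ℝ) 1) : Tendsto (muA a) (𝓝[>] 0) atTop := by
  have hsq : Tendsto (fun r : ℝ => r ^ 2) (𝓝[>] 0) (𝓝 0) :=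
    ((continuous_pow 2).tendsto' 0 0 (zero_pow two_ne_zero)).mono_left nhdsWithin_le_nhds
  have hsub : Tendsto (fun r : ℝ => 1 - r ^ 2) (𝓝[>] 0) (𝓝[<] 1) := by
    refine tendsto_nhdsWithin_iff.2 ⟨by simpa using (tendsto_const_nhds (x := (1 : ℝ))).sub hsq, ?_⟩
    filter_upwards [Ioo_mem_nhdsGT one_pos] with r hr
    exact (one_sub_sq_mem_Ico_zero_one hr).2
  have hden : Tendsto (fun r => (hypF a (1 - a) 1 (r ^ 2))⁻¹) (𝓝[>] 0) (𝓝 1) := by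
    simpa using ((tendsto_hypF_nhds_zero ha).comp hsq).inv₀ one_ne_zero
  unfold muA
  simpa only [div_eq_mul_inv, Function.comp_def] using
    (((tendsto_hypF_nhdsLT_one ha).comp hsub).const_mul_atTop
      (pi_div_two_mul_sin_pos ha)).atTop_mul_pos one_pos hden

lemma tendsto_muA_nhdsLT_one (ha : a ∈ Ioo (0 : ℝ) 1) : Tendsto (muA a) (𝓝[<] 1) (𝓝 0) := by
  have hsq : Tendsto (fun r : ℝ => r ^ 2) (𝓝[<] 1) (𝓝[<] 1) := by
    refine tendsto_nhdsWithin_iff.2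
      ⟨((continuous_pow 2).tendsto' 1 1 (one_pow 2)).mono_left nhdsWithin_le_nhds, ?_⟩
    filter_upwards [Ioo_mem_nhdsLT one_pos] with r hr
    exact (sq_mem_Ico_zero_one hr).2
  have hsub : Tendsto (fun r : ℝ => 1 - r ^ 2) (𝓝[<] 1) (𝓝 0) := by
    simpa using (tendsto_const_nhds (x := (1 : ℝ))).sub (tendsto_nhdsWithin_iff.1 hsq).1
  unfold muA
  simpa using (tendsto_const_nhds.mul ((tendsto_hypF_nhds_zero ha).comp hsub)).div_atTop
    ((tendsto_hypF_nhdsLT_one ha).comp hsq)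

end Modulus

/-- For each `a ∈ (0,1)`, `μₐ` is a strictly decreasing homeomorphism of `(0,1)` onto `(0,∞)`. -/
theorem muA_strict_anti_homeomorphism (a : ℝ) (ha : a ∈ Set.Ioo (0:ℝ) 1) :
    StrictAntiOn (muA a) (Set.Ioo (0:ℝ) 1) ∧
    ContinuousOn (muA a) (Set.Ioo (0:ℝ) 1) ∧
    Set.MapsTo (muA a) (Set.Ioo (0:ℝ) 1) (Set.Ioi (0:ℝ)) ∧
    Set.SurjOn (muA a) (Set.Ioo (0:ℝ) 1) (Set.Ioi (0:ℝ)) :=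
  ⟨strictAntiOn_muA ha, continuousOn_muA ha, fun _ hr => muA_pos ha hr,
    isPreconnected_Ioo.intermediate_value_Ioi (le_principal_iff.2 (Ioo_mem_nhdsLT one_pos))
      (le_principal_iff.2 (Ioo_mem_nhdsGT one_pos)) (continuousOn_muA ha)
      (tendsto_muA_nhdsLT_one ha) (tendsto_muA_nhdsGT_zero ha)⟩
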